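/- Let λ > 0, α ≥ 0, let Lap ∈ ℝ^{L×L} be symmetric and positive semidefinite, let A_w ∈ ℝ^{N×L} and D_w ∈ ℝ^{L×L} for w = 1,…,W be fixed, and define f(C) = λ Σ_{w=1}^W ‖A_w − A_w(D_w + C)‖_F² + αλ·tr(Cᵀ·Lap·C). If the matrix Σ_{w=1}^W A_wᵀA_w + α·Lap is invertible, then C* = (Σ_{w=1}^W A_wᵀA_w + α·Lap)^{-1} · Σ_{w=1}^W A_wᵀ·A_w·(I − D_w) is the unique global minimizer of f over ℝ^{L×L}. (This is the closed-form update rule of Eq. (21) for the group-commonality matrix C_m.) -/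

import Mathlib

open Matrix

/-- The squared Frobenius norm of a real matrix: `‖M‖_F² = ∑ i ∑ j M i j ^ 2`. -/
def frobSq {n L : ℕ} (M : Matrix (Fin n) (Fin L) ℝ) : ℝ :=
  ∑ i, ∑ j, (M i j) ^ 2

lemma frobSq_eq_trace {n L : ℕ} (M : Matrix (Fin n) (Fin L) ℝ) :
    frobSq M = Matrix.trace (Mᵀ * M) := by
  simp only [frobSq, Matrix.trace, Matrix.diag, Matrix.mul_apply, Matrix.transpose_apply, sq]
  rw [Finset.sum_comm]

lemma frobSq_nonneg {n L : ℕ} (M : Matrix (Fin n) (Fin L) ℝ) : 0 ≤ frobSq M :=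
  Finset.sum_nonneg fun _ _ => Finset.sum_nonneg fun _ _ => sq_nonneg _

lemma frobSq_eq_zero {n L : ℕ} {M : Matrix (Fin n) (Fin L) ℝ} (h : frobSq M = 0) :
    M = 0 := by
  ext i j
  have h1 := (Finset.sum_eq_zero_iff_of_nonneg
    (fun i _ => Finset.sum_nonneg fun j _ => sq_nonneg (M i j))).mp h i (Finset.mem_univ i)
  have h2 := (Finset.sum_eq_zero_iff_of_nonneg
    (fun j _ => sq_nonneg (M i j))).mp h1 j (Finset.mem_univ j)
  simpa using pow_eq_zero_iff (n := 2) (by norm_num) |>.mp h2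

lemma psd_tAA {N L : ℕ} (A : Matrix (Fin N) (Fin L) ℝ) : (Aᵀ * A).PosSemidef := by
  have := Matrix.posSemidef_conjTranspose_mul_self A
  rwa [Matrix.conjTranspose_eq_transpose_of_trivial] at this

lemma psd_smul {L : ℕ} {α : ℝ} (hα : 0 ≤ α) {M : Matrix (Fin L) (Fin L) ℝ}
    (h : M.PosSemidef) : (α • M).PosSemidef := by
  refine ⟨by simp [Matrix.IsHermitian, Matrix.conjTranspose_smul, h.1.eq]; rw [show Mᵀ = M from by simpa [Matrix.IsHermitian, Matrix.conjTranspose_eq_transpose_of_trivial] using h.1.eq], fun x => ?_⟩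
  have := h.2 x
  exact (h.smul hα).2 x

lemma trace_expand_sub {n L : ℕ} (B M : Matrix (Fin n) (Fin L) ℝ) :
    Matrix.trace ((B - M)ᵀ * (B - M))
      = Matrix.trace (Bᵀ * B) - 2 * Matrix.trace (Bᵀ * M) + Matrix.trace (Mᵀ * M) := by
  have h2 : Matrix.trace (Mᵀ * B) = Matrix.trace (Bᵀ * M) := by
    rw [← Matrix.trace_transpose (Mᵀ * B), Matrix.transpose_mul, Matrix.transpose_transpose]
  simp only [Matrix.transpose_sub, Matrix.sub_mul, Matrix.mul_sub, Matrix.trace_sub, h2]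
  ring

lemma expand_term {N L : ℕ} (A : Matrix (Fin N) (Fin L) ℝ) (D C : Matrix (Fin L) (Fin L) ℝ) :
    frobSq (A - A * (D + C)) = frobSq (A * (1 - D))
      - 2 * Matrix.trace (Cᵀ * (Aᵀ * A * (1 - D)))
      + Matrix.trace (Cᵀ * (Aᵀ * A) * C) := by
  have h : A - A * (D + C) = A * (1 - D) - A * C := by
    rw [Matrix.mul_add, Matrix.mul_sub, Matrix.mul_one]; abel
  have h3 : Matrix.trace ((A * (1 - D))ᵀ * (A * C))
      = Matrix.trace (Cᵀ * (Aᵀ * A * (1 - D))) := by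
    conv_rhs => rw [← Matrix.trace_transpose]
    simp [Matrix.transpose_mul, Matrix.mul_assoc]
  have h4 : Matrix.trace ((A * C)ᵀ * (A * C)) = Matrix.trace (Cᵀ * (Aᵀ * A) * C) := by
    simp [Matrix.transpose_mul, Matrix.mul_assoc]
  rw [h, frobSq_eq_trace, frobSq_eq_trace, trace_expand_sub, h3, h4]

/-- closed-form update rule of Eq. (21): if
`K = ∑ w, (A w)ᵀ (A w) + α • Lap` is invertible, then
`C* = K⁻¹ ∑ w, (A w)ᵀ (A w) (I − D w)` is the unique global minimizer of
`f(C) = λ ∑ w, ‖A w − A w (D w + C)‖_F² + α λ tr (Cᵀ Lap C)`. -/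
theorem Cm_update_unique_minimizer {N L W : ℕ}
    (lam α : ℝ) (hlam : 0 < lam) (hα : 0 ≤ α)
    (Lap : Matrix (Fin L) (Fin L) ℝ) (hLapSym : Lapᵀ = Lap) (hLap : Lap.PosSemidef)
    (A : Fin W → Matrix (Fin N) (Fin L) ℝ)
    (D : Fin W → Matrix (Fin L) (Fin L) ℝ)
    (hK : IsUnit (∑ w, (A w)ᵀ * A w + α • Lap)) :
    let f : Matrix (Fin L) (Fin L) ℝ → ℝ := fun C =>
      lam * ∑ w, frobSq (A w - A w * (D w + C))
        + α * lam * Matrix.trace (Cᵀ * Lap * C)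
    let Cstar : Matrix (Fin L) (Fin L) ℝ :=
      (∑ w, (A w)ᵀ * A w + α • Lap)⁻¹ * ∑ w, (A w)ᵀ * A w * (1 - D w)
    (∀ C, f Cstar ≤ f C) ∧ ∀ C, (∀ C', f C ≤ f C') → C = Cstar := by
  intro f Cstar
  set K : Matrix (Fin L) (Fin L) ℝ := ∑ w, (A w)ᵀ * A w + α • Lap with hKdef
  set S : Matrix (Fin L) (Fin L) ℝ := ∑ w, (A w)ᵀ * A w * (1 - D w) with hSdef
  -- K is positive semidefinite
  have hsumps : (∑ w, (A w)ᵀ * A w : Matrix (Fin L) (Fin L) ℝ).PosSemidef := by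
    exact Finset.sum_induction (fun w => (A w)ᵀ * A w) (fun M => Matrix.PosSemidef M)
      (fun a b ha hb => ha.add hb) Matrix.PosSemidef.zero (fun w _ => psd_tAA (A w))
  have hKps : K.PosSemidef := by
    rw [hKdef]
    exact hsumps.add (psd_smul hα hLap)
  have hKsym : Kᵀ = K := by
    have := hKps.1
    simpa [Matrix.IsHermitian] using this
  have hdet : IsUnit K.det := (Matrix.isUnit_iff_isUnit_det K).mp hK
  have hKS : K * Cstar = S := by
    show K * (K⁻¹ * S) = S
    rw [← Matrix.mul_assoc, Matrix.mul_nonsing_inv K hdet, Matrix.one_mul]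
  -- expansion of f
  have hf : ∀ C, f C = lam * ∑ w, frobSq (A w * (1 - D w))
      + lam * (Matrix.trace (Cᵀ * K * C) - 2 * Matrix.trace (Cᵀ * S)) := by
    intro C
    show lam * ∑ w, frobSq (A w - A w * (D w + C))
        + α * lam * Matrix.trace (Cᵀ * Lap * C) = _
    have hsum : ∑ w, frobSq (A w - A w * (D w + C))
        = ∑ w, frobSq (A w * (1 - D w))
          - 2 * Matrix.trace (Cᵀ * S)
          + ∑ w, Matrix.trace (Cᵀ * ((A w)ᵀ * A w) * C) := by
      rw [Finset.sum_congr rfl (fun w _ => expand_term (A w) (D w) C)]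
      rw [Finset.sum_add_distrib, Finset.sum_sub_distrib]
      congr 1
      congr 1
      rw [← Finset.mul_sum, hSdef, Matrix.mul_sum, Matrix.trace_sum]
    have hq : ∑ w, Matrix.trace (Cᵀ * ((A w)ᵀ * A w) * C) + α * Matrix.trace (Cᵀ * Lap * C)
        = Matrix.trace (Cᵀ * K * C) := by
      rw [hKdef, Matrix.mul_add, Matrix.add_mul, Matrix.trace_add]
      congr 1
      · rw [Matrix.mul_sum, Matrix.sum_mul, Matrix.trace_sum]
      · rw [Matrix.mul_smul, Matrix.smul_mul, Matrix.trace_smul]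
        simp
    rw [hsum]
    linear_combination lam * hq
  -- key identity
  have key : ∀ C, f C = f Cstar + lam * Matrix.trace ((C - Cstar)ᵀ * K * (C - Cstar)) := by
    intro C
    rw [hf C, hf Cstar]
    have hsymm : Matrix.trace (Cstarᵀ * K * C) = Matrix.trace (Cᵀ * K * Cstar) := by
      conv_lhs => rw [← Matrix.trace_transpose]
      simp [Matrix.transpose_mul, hKsym, Matrix.mul_assoc]
    have hexp : Matrix.trace ((C - Cstar)ᵀ * K * (C - Cstar))
        = Matrix.trace (Cᵀ * K * C) - 2 * Matrix.trace (Cᵀ * S)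
          - (Matrix.trace (Cstarᵀ * K * Cstar) - 2 * Matrix.trace (Cstarᵀ * S)) := by
      have e1 : Matrix.trace (Cᵀ * K * Cstar) = Matrix.trace (Cᵀ * S) := by
        rw [Matrix.mul_assoc, hKS]
      have e2 : Matrix.trace (Cstarᵀ * K * Cstar) = Matrix.trace (Cstarᵀ * S) := by
        rw [Matrix.mul_assoc, hKS]
      simp only [Matrix.transpose_sub, Matrix.sub_mul, Matrix.mul_sub, Matrix.trace_sub]
      rw [hsymm] at *
      linarith [e1, e2]
    rw [hexp]; ring
  -- factor K = Bᵀ B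
  obtain ⟨m, v, hv⟩ := Matrix.posSemidef_iff_eq_sum_vecMulVec.mp hKps
  obtain ⟨B, hB⟩ : ∃ B : Matrix (Fin m) (Fin L) ℝ, K = Bᵀ * B := ⟨Matrix.of fun i j => v i j, by
    rw [hv]; ext a b; simp [Matrix.mul_apply, Matrix.vecMulVec_apply, Matrix.sum_apply, mul_comm]⟩
  have hBt : K = Bᵀ * B := by simpa using hB
  have hquad : ∀ E : Matrix (Fin L) (Fin L) ℝ,
      Matrix.trace (Eᵀ * K * E) = frobSq (B * E) := by
    intro E
    rw [frobSq_eq_trace, hBt]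
    simp [Matrix.transpose_mul, Matrix.mul_assoc]
  have hnonneg : ∀ E : Matrix (Fin L) (Fin L) ℝ, 0 ≤ Matrix.trace (Eᵀ * K * E) := by
    intro E; rw [hquad E]; exact frobSq_nonneg _
  constructor
  · intro C
    rw [key C]
    have := mul_nonneg hlam.le (hnonneg (C - Cstar))
    linarith
  · intro C hmin
    have h1 : f C ≤ f Cstar := hmin Cstar
    have h2 : f Cstar ≤ f C := by
      rw [key C]
      have := mul_nonneg hlam.le (hnonneg (C - Cstar))
      linarith
    have heq : f C = f Cstar := le_antisymm h1 h2
    have hz : Matrix.trace ((C - Cstar)ᵀ * K * (C - Cstar)) = 0 := by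
      have := key C
      rw [heq] at this
      have hlz : lam * Matrix.trace ((C - Cstar)ᵀ * K * (C - Cstar)) = 0 := by linarith
      exact (mul_eq_zero.mp hlz).resolve_left (ne_of_gt hlam)
    rw [hquad] at hz
    have hBE : B * (C - Cstar) = 0 := frobSq_eq_zero hz
    have hKE : K * (C - Cstar) = 0 := by
      rw [hBt, Matrix.mul_assoc, hBE, Matrix.mul_zero]
    have hE : C - Cstar = 0 := by
      have := congrArg (fun M => K⁻¹ * M) hKE
      simpa [← Matrix.mul_assoc, Matrix.nonsing_inv_mul K hdet] using this
    exact sub_eq_zero.mp hE
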